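/- (Conditional expectation difference bound.) Let π_p and π_{p−1} be probability densities on E^j × E with E ⊂ ℝ compact, such that the marginals satisfy π_{q,0}(x_{1:j}) ≥ c > 0 for q ∈ {p−1, p}, and sup_{x_{1:j}} |π_p(x_{1:j}) − π_{p−1}(x_{1:j})| ≤ ε (for both the full and marginal densities). Then for every φ with Osc(φ) ≤ 1 and every x_{1:j}, |π_p(φ | x_{1:j}) − π_{p−1}(φ | x_{1:j})| ≤ K ε, where K depends only on c and the Lebesgue measure of E, and π_q(φ | x_{1:j}) = ∫ φ(x) π_q(x_{1:j}, x) dx / π_q(x_{1:j}). -/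

import Mathlib

/-!
Replacing `φ` by `φ - φ 0` shifts both conditional expectations by the same constant, so we
may assume `|φ| ≤ 1`. With `A, B` the integrals of `φ π_p, φ π_q` and `a, b` the marginals,
`A / a - B / b = ((A - B) + (B / b) (b - a)) / a`, where `|B / b| ≤ 1` because `π_q ≥ 0`,
`|A - B| ≤ vol(E) ε` and `|b - a| ≤ ε`; dividing by `a ≥ c` gives `K = (vol(E) + 1) / c`.
-/

open MeasureTheory Set

/-- The box `E^j` inside `Fin j → ℝ`. -/
def box (j : ℕ) (E : Set ℝ) : Set (Fin j → ℝ) := Set.univ.pi fun _ => E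

/-- Conditional expectation of `φ` under the density `π` on `E^j × E`, given the first
block `x`. -/
noncomputable def condExpOf (E : Set ℝ) {j : ℕ} (π : (Fin j → ℝ) → ℝ → ℝ)
    (φ : ℝ → ℝ) (x : Fin j → ℝ) : ℝ :=
  (∫ t in E, φ t * π x t) / ∫ t in E, π x t

lemma abs_div_sub_div_le {A B a b c δ ε : ℝ} (hc : 0 < c) (ha : c ≤ a) (hb : c ≤ b)
    (hAB : |A - B| ≤ δ) (hB : |B| ≤ b) (hab : |a - b| ≤ ε) :
    |A / a - B / b| ≤ (δ + ε) / c := by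
  have ha0 : 0 < a := hc.trans_le ha
  have hb0 : 0 < b := hc.trans_le hb
  have hBb : |B / b| ≤ 1 := by
    rw [abs_div, abs_of_pos hb0]
    exact div_le_one_of_le₀ hB hb0.le
  have hnum : |(A - B) + B / b * (b - a)| ≤ δ + ε :=
    calc |(A - B) + B / b * (b - a)| ≤ |A - B| + |B / b| * |b - a| := by
          rw [← abs_mul]; exact abs_add_le _ _
      _ ≤ δ + 1 * ε := by
          rw [abs_sub_comm b]
          gcongr
      _ = δ + ε := by ring
  have hsplit : A / a - B / b = ((A - B) + B / b * (b - a)) / a := by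
    field_simp
    ring
  rw [hsplit, abs_div, abs_of_pos ha0]
  exact div_le_div₀ ((abs_nonneg _).trans hnum) hnum hc ha

section Integral

variable {α : Type*} [MeasurableSpace α] {μ : Measure α} {ψ f g : α → ℝ}

lemma abs_integral_mul_le_integral (hψ : ∀ᵐ t ∂μ, |ψ t| ≤ 1) (hg : 0 ≤ᵐ[μ] g)
    (hg_int : Integrable g μ) :
    |∫ t, ψ t * g t ∂μ| ≤ ∫ t, g t ∂μ := by
  refine (abs_integral_le_integral_abs).trans (integral_mono_of_nonneg ?_ hg_int ?_)
  · exact Filter.Eventually.of_forall fun _ => abs_nonneg _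
  · filter_upwards [hψ, hg] with t hψt hgt
    rw [abs_mul, abs_of_nonneg hgt]
    exact mul_le_of_le_one_left hgt hψt

lemma abs_integral_mul_sub_integral_mul_le [IsFiniteMeasure μ] {ε : ℝ}
    (hψm : AEStronglyMeasurable ψ μ) (hψ : ∀ᵐ t ∂μ, |ψ t| ≤ 1)
    (hf_int : Integrable f μ) (hg_int : Integrable g μ) (hfg : ∀ᵐ t ∂μ, |f t - g t| ≤ ε) :
    |(∫ t, ψ t * f t ∂μ) - ∫ t, ψ t * g t ∂μ| ≤ μ.real univ * ε := by
  rw [← integral_sub (hf_int.bdd_mul hψm hψ) (hg_int.bdd_mul hψm hψ), mul_comm,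
    ← Real.norm_eq_abs]
  refine norm_integral_le_of_norm_le_const ?_
  filter_upwards [hψ, hfg] with t hψt hfgt
  rw [← mul_sub, Real.norm_eq_abs, abs_mul]
  simpa using mul_le_mul hψt hfgt (abs_nonneg _) zero_le_one

theorem abs_integral_mul_div_sub_integral_mul_div_le [IsFiniteMeasure μ] {c ε : ℝ}
    (hc : 0 < c) (hψm : AEStronglyMeasurable ψ μ) (hψ : ∀ᵐ t ∂μ, |ψ t| ≤ 1)
    (hg : 0 ≤ᵐ[μ] g) (hcf : c ≤ ∫ t, f t ∂μ) (hcg : c ≤ ∫ t, g t ∂μ)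
    (hfg : ∀ᵐ t ∂μ, |f t - g t| ≤ ε) (hfg_int : |(∫ t, f t ∂μ) - ∫ t, g t ∂μ| ≤ ε) :
    |(∫ t, ψ t * f t ∂μ) / (∫ t, f t ∂μ) - (∫ t, ψ t * g t ∂μ) / ∫ t, g t ∂μ|
      ≤ (μ.real univ + 1) / c * ε := by
  have hf_int : Integrable f μ := .of_integral_ne_zero (hc.trans_le hcf).ne'
  have hg_int : Integrable g μ := .of_integral_ne_zero (hc.trans_le hcg).ne'
  rw [div_mul_eq_mul_div, add_mul, one_mul]
  exact abs_div_sub_div_le hc hcf hcg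
    (abs_integral_mul_sub_integral_mul_le hψm hψ hf_int hg_int hfg)
    (abs_integral_mul_le_integral hψ hg hg_int) hfg_int

end Integral

lemma condExpOf_sub_const {E : Set ℝ} {j : ℕ} {π : (Fin j → ℝ) → ℝ → ℝ} {φ : ℝ → ℝ}
    {x : Fin j → ℝ} (k : ℝ) (hπ : (∫ t in E, π x t) ≠ 0)
    (hφπ : IntegrableOn (fun t => (φ t - k) * π x t) E) :
    condExpOf E π (fun t => φ t - k) x = condExpOf E π φ x - k := by
  have hπ_int : IntegrableOn (π x) E := .of_integral_ne_zero hπ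
  have hsplit : (fun t => φ t * π x t) = fun t => (φ t - k) * π x t + k * π x t := by
    funext t; ring
  rw [condExpOf, condExpOf, hsplit, integral_add hφπ (hπ_int.const_mul k), integral_const_mul,
    add_div, mul_div_cancel_right₀ _ hπ, add_sub_cancel_right]

theorem stmt18_general (E : Set ℝ) (hEc : IsCompact E) (hEm : MeasurableSet E)
    (c : ℝ) (hc : 0 < c) (j : ℕ) :
    ∃ K : ℝ, 0 < K ∧
      ∀ (πp πq : (Fin j → ℝ) → ℝ → ℝ),
        Measurable (Function.uncurry πp) → Measurable (Function.uncurry πq) →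
        (∀ x ∈ box j E, ∀ t ∈ E, 0 ≤ πp x t ∧ 0 ≤ πq x t) →
      ∀ ε : ℝ, 0 ≤ ε →
        (∀ x ∈ box j E, c ≤ (∫ t in E, πp x t) ∧ c ≤ ∫ t in E, πq x t) →
        (∀ x ∈ box j E, ∀ t ∈ E, |πp x t - πq x t| ≤ ε) →
        (∀ x ∈ box j E, |(∫ t in E, πp x t) - ∫ t in E, πq x t| ≤ ε) →
      ∀ (φ : ℝ → ℝ), Measurable φ → (∀ s t, |φ s - φ t| ≤ 1) →
      ∀ x ∈ box j E,
        |condExpOf E πp φ x - condExpOf E πq φ x| ≤ K * ε := by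
  refine ⟨((volume E).toReal + 1) / c, by positivity, ?_⟩
  intro πp πq _ _ hpos ε _ hlow hdiff hmarg φ hφm hφosc x hx
  have : IsFiniteMeasure (volume.restrict E) := isFiniteMeasure_restrict.2 hEc.measure_lt_top.ne
  set ψ : ℝ → ℝ := fun t => φ t - φ 0
  have hψm : AEStronglyMeasurable ψ (volume.restrict E) :=
    (hφm.sub measurable_const).aestronglyMeasurable
  have hψ : ∀ᵐ t ∂volume.restrict E, |ψ t| ≤ 1 := .of_forall fun t => hφosc t 0
  obtain ⟨hcp, hcq⟩ := hlow x hx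
  have hψπ_int {π : (Fin j → ℝ) → ℝ → ℝ} (hcπ : c ≤ ∫ t in E, π x t) :
      IntegrableOn (fun t => ψ t * π x t) E :=
    (Integrable.of_integral_ne_zero (hc.trans_le hcπ).ne').bdd_mul hψm hψ
  rw [← sub_sub_sub_cancel_right _ _ (φ 0),
    ← condExpOf_sub_const _ (hc.trans_le hcp).ne' (hψπ_int hcp),
    ← condExpOf_sub_const _ (hc.trans_le hcq).ne' (hψπ_int hcq)]
  have := abs_integral_mul_div_sub_integral_mul_div_le hc hψm hψ
    (ae_restrict_of_forall_mem hEm fun t ht => (hpos x hx t ht).2) hcp hcq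
    (ae_restrict_of_forall_mem hEm (hdiff x hx)) (hmarg x hx)
  rwa [measureReal_restrict_apply_univ] at this

/-- Conditional expectation difference bound: if the marginals of two densities on
`E^j × E` are bounded below by `c > 0` and the densities (joint and marginal) differ
uniformly by at most `ε`, then conditional expectations of any `φ` with `Osc(φ) ≤ 1`
differ by at most `K ε`, with `K` depending only on `c` and the Lebesgue measure of `E`. -/
theorem stmt18 (E : Set ℝ) (hEc : IsCompact E) (hEm : MeasurableSet E)
    (hE : 0 < (volume E).toReal) (c : ℝ) (hc : 0 < c) (j : ℕ) :
    ∃ K : ℝ, 0 < K ∧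
      ∀ (πp πq : (Fin j → ℝ) → ℝ → ℝ),
        Measurable (Function.uncurry πp) → Measurable (Function.uncurry πq) →
        (∀ x ∈ box j E, ∀ t ∈ E, 0 ≤ πp x t ∧ 0 ≤ πq x t) →
      ∀ ε : ℝ, 0 ≤ ε →
        (∀ x ∈ box j E, c ≤ (∫ t in E, πp x t) ∧ c ≤ ∫ t in E, πq x t) →
        (∀ x ∈ box j E, ∀ t ∈ E, |πp x t - πq x t| ≤ ε) →
        (∀ x ∈ box j E, |(∫ t in E, πp x t) - ∫ t in E, πq x t| ≤ ε) →
      ∀ (φ : ℝ → ℝ), Measurable φ → (∀ s t, |φ s - φ t| ≤ 1) →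
      ∀ x ∈ box j E,
        |condExpOf E πp φ x - condExpOf E πq φ x| ≤ K * ε :=
  stmt18_general E hEc hEm c hc j
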